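/- For every l ≥ 0, every m ≥ 1, and every k with 0 ≤ k ≤ l, the polynomial Φ_m(q)^{f(l,m)} divides {l−k}_q! · {k}_q! in ℤ[q], where f(l,m) = max(0, ⌊(l+1)/m⌋ − 1). Consequently the ideal I_l of ℤ[q,q^{-1}] generated by the elements {l−k}_q!{k}_q!, k = 0,…,l, is contained in the principal ideal generated by ∏_{m≥1} Φ_m(q)^{f(l,m)}. -/

import Mathlib

open Polynomial LaurentPolynomial

/-!
Among the factors `q^(i+1) - 1`, `i < n`, of `{n}_q!`, exactly `⌊n/m⌋` have `m ∣ i + 1` and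
are therefore divisible by `Φ_m(q)`. Since `⌊(a+b+1)/m⌋ ≤ ⌊a/m⌋ + ⌊b/m⌋ + 1`, this gives the
divisibility of `{a}_q!{b}_q!`. Distinct cyclotomic polynomials are coprime over `ℚ`, so by
Gauss's lemma their monic product `∏ Φ_m^{f(l,m)}` also divides it in `ℤ[q]`.
-/

noncomputable def qFactorial (R : Type*) [CommRing R] (n : ℕ) : R[X] :=
  ∏ i ∈ Finset.range n, (X ^ (i + 1) - 1)

theorem cyclotomic_dvd_X_pow_sub_one_of_dvd (R : Type*) [CommRing R] {m n : ℕ} (h : m ∣ n) :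
    cyclotomic m R ∣ X ^ n - 1 := by
  obtain ⟨c, rfl⟩ := h
  rw [pow_mul, ← one_pow c]
  exact (cyclotomic.dvd_X_pow_sub_one m R).trans (sub_dvd_pow_sub_pow _ _ c)

theorem cyclotomic_pow_div_dvd_qFactorial (R : Type*) [CommRing R] (m n : ℕ) :
    cyclotomic m R ^ (n / m) ∣ qFactorial R n := by
  classical
  calc cyclotomic m R ^ (n / m)
      = ∏ _i ∈ {i ∈ Finset.range n | m ∣ i + 1}, cyclotomic m R := by
        rw [Finset.prod_const, Nat.card_multiples]
    _ ∣ ∏ i ∈ {i ∈ Finset.range n | m ∣ i + 1}, (X ^ (i + 1) - 1 : R[X]) :=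
        Finset.prod_dvd_prod_of_dvd _ _ fun _ hi =>
          cyclotomic_dvd_X_pow_sub_one_of_dvd R (Finset.mem_filter.mp hi).2
    _ ∣ qFactorial R n :=
        Finset.prod_dvd_prod_of_subset _ _ _ (Finset.filter_subset _ _)

theorem Nat.add_add_one_div_sub_one_le (a b m : ℕ) : (a + b + 1) / m - 1 ≤ a / m + b / m := by
  rcases Nat.eq_zero_or_pos m with rfl | hm
  · simp
  suffices h : (a + b + 1) / m < a / m + b / m + 2 from
    Nat.sub_le_of_le_add (Nat.lt_succ_iff.mp h)
  rw [Nat.div_lt_iff_lt_mul hm]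
  have := Nat.div_add_mod a m
  have := Nat.div_add_mod b m
  have := Nat.mod_lt a hm
  have := Nat.mod_lt b hm
  nlinarith

theorem cyclotomic_pow_dvd_qFactorial_mul (R : Type*) [CommRing R] (m a b : ℕ) :
    cyclotomic m R ^ ((a + b + 1) / m - 1) ∣ qFactorial R a * qFactorial R b := by
  refine (pow_dvd_pow _ (Nat.add_add_one_div_sub_one_le a b m)).trans ?_
  rw [pow_add]
  exact mul_dvd_mul (cyclotomic_pow_div_dvd_qFactorial R m a)
    (cyclotomic_pow_div_dvd_qFactorial R m b)

theorem prod_cyclotomic_pow_dvd {s : Finset ℕ} {e : ℕ → ℕ} {P : ℤ[X]}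
    (h : ∀ m ∈ s, cyclotomic m ℤ ^ e m ∣ P) : ∏ m ∈ s, cyclotomic m ℤ ^ e m ∣ P := by
  have hmonic : (∏ m ∈ s, cyclotomic m ℤ ^ e m).Monic :=
    monic_prod_of_monic _ _ fun m _ => (cyclotomic.monic m ℤ).pow _
  rw [IsPrimitive.Int.dvd_iff_map_cast_dvd_map_cast _ _ hmonic.isPrimitive, Polynomial.map_prod]
  refine Finset.prod_dvd_of_coprime (fun a _ b _ hab => ?_) fun m hm => ?_
  · simp only [Function.onFun, Polynomial.map_pow, map_cyclotomic]
    exact (cyclotomic.isCoprime_rat hab).pow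
  · simpa only [coe_mapRingHom, Polynomial.map_pow, map_cyclotomic] using
      map_dvd (mapRingHom (Int.castRingHom ℚ)) (h m hm)

/-- For `l ≥ 0`, `m ≥ 1` and `0 ≤ k ≤ l`, the polynomial `Φ_m(q)^{f(l,m)}` divides
`{l−k}_q! · {k}_q!` in `ℤ[q]`, where `f(l,m) = max(0, ⌊(l+1)/m⌋ − 1)` (which is
`(l+1)/m - 1` in truncated natural subtraction).  Consequently, the ideal `I_l` of
`ℤ[q,q⁻¹]` generated by the `{l−k}_q!{k}_q!` for `k = 0,…,l` is contained in the
principal ideal generated by `∏_{m=1}^{l+1} Φ_m(q)^{f(l,m)}`. -/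
theorem cyclotomic_pow_dvd_qfactorial_mul_and_ideal (l : ℕ) :
    (∀ m : ℕ, 1 ≤ m → ∀ k : ℕ, k ≤ l →
      (cyclotomic m ℤ) ^ ((l + 1) / m - 1) ∣
        (∏ i ∈ Finset.range (l - k), (X ^ (i + 1) - 1 : ℤ[X])) *
          (∏ i ∈ Finset.range k, (X ^ (i + 1) - 1 : ℤ[X]))) ∧
    Ideal.span ((fun k : ℕ => Polynomial.toLaurent
        ((∏ i ∈ Finset.range (l - k), (X ^ (i + 1) - 1 : ℤ[X])) *
          (∏ i ∈ Finset.range k, (X ^ (i + 1) - 1 : ℤ[X])))) '' {k | k ≤ l}) ≤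
      Ideal.span {Polynomial.toLaurent
        (∏ m ∈ Finset.Icc 1 (l + 1), (cyclotomic m ℤ) ^ ((l + 1) / m - 1))} := by
  have hdvd : ∀ m k, k ≤ l →
      cyclotomic m ℤ ^ ((l + 1) / m - 1) ∣ qFactorial ℤ (l - k) * qFactorial ℤ k := by
    intro m k hk
    simpa only [Nat.sub_add_cancel hk] using cyclotomic_pow_dvd_qFactorial_mul ℤ m (l - k) k
  refine ⟨fun m _ k hk => hdvd m k hk, ?_⟩
  rw [Ideal.span_le]
  rintro _ ⟨k, hk, rfl⟩
  exact Ideal.mem_span_singleton.mpr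
    (map_dvd _ (prod_cyclotomic_pow_dvd fun m _ => hdvd m k hk))
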